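/- arXiv:2207.07352 — 5 statements merged into one kernel-verified Lean document; each statement's English description precedes it below -/
import Mathlib

section
/- Let z_F > 0, let D : ℝ → ℝ be continuous on [0,z_F] with D(z) > 0 for all z ∈ [0,z_F) and with 1/D integrable on (0,z_F), and set I(D) = (∫₀^{z_F} 1/D(z) dz)^{1/2}. Then for every continuously differentiable function v : ℝ → ℝ on [0,z_F] and every z ∈ [0,z_F], one has |v(z)| ≤ (1/√z_F + 2·I(D)) · ‖v‖_α, where ‖v‖_α = (∫₀^{z_F} D(z)·v'(z)² dz + ∫₀^{z_F} v(z)² dz)^{1/2}. -/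
open MeasureTheory

/-- `I(D) = (∫₀^{z_F} 1/D)^{1/2}`. -/
noncomputable def IofD (zF : ℝ) (D : ℝ → ℝ) : ℝ :=
  Real.sqrt (∫ t in (0:ℝ)..zF, 1 / D t)

/-- The weighted norm `‖v‖_α = (∫₀^{z_F} D v'² + ∫₀^{z_F} v²)^{1/2}`. -/
noncomputable def normAlpha (zF : ℝ) (D v v' : ℝ → ℝ) : ℝ :=
  Real.sqrt ((∫ t in (0:ℝ)..zF, D t * (v' t) ^ 2) + ∫ t in (0:ℝ)..zF, (v t) ^ 2)

/-!
Writing `v z = v y + ∫_y^z v'` and averaging over `y ∈ [0, z_F]` gives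
`|v z| ≤ z_F⁻¹ ∫ |v| + ∫ |v'|`. By Cauchy–Schwarz, `∫ |v| ≤ √z_F ‖v‖_{L²}`, and, splitting
`|v'| = D^{-1/2} · D^{1/2} |v'|`, `∫ |v'| ≤ I(D) ‖√D v'‖_{L²}`; both `L²` norms are at most
`‖v‖_α`.
-/

open Set

section CauchySchwarz

variable {α : Type*} [MeasurableSpace α] {μ : Measure α}

theorem integral_mul_le_sqrt_mul_sqrt_of_nonneg {f g : α → ℝ}
    (hf₀ : 0 ≤ᵐ[μ] f) (hg₀ : 0 ≤ᵐ[μ] g) (hf : MemLp f 2 μ) (hg : MemLp g 2 μ) :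
    ∫ x, f x * g x ∂μ ≤ √(∫ x, f x ^ 2 ∂μ) * √(∫ x, g x ^ 2 ∂μ) := by
  have h := integral_mul_le_Lp_mul_Lq_of_nonneg Real.HolderConjugate.two_two hf₀ hg₀
    (by simpa using hf) (by simpa using hg)
  simpa only [Real.rpow_two, ← Real.sqrt_eq_rpow] using h

theorem integral_abs_le_sqrt_integral_inv_mul_sqrt_integral_mul_sq {D u : α → ℝ}
    (hD : ∀ᵐ x ∂μ, 0 < D x) (hDinv : Integrable (fun x => 1 / D x) μ)
    (hDu : Integrable (fun x => D x * u x ^ 2) μ) (hu : AEStronglyMeasurable u μ) :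
    ∫ x, |u x| ∂μ ≤ √(∫ x, 1 / D x ∂μ) * √(∫ x, D x * u x ^ 2 ∂μ) := by
  have hDm : AEStronglyMeasurable D μ := by
    have h : AEMeasurable (fun x => (1 / D x)⁻¹) μ := hDinv.aemeasurable.inv
    simpa only [one_div, inv_inv] using h.aestronglyMeasurable
  have hsqrtD : AEStronglyMeasurable (fun x => √(D x)) μ :=
    Real.continuous_sqrt.comp_aestronglyMeasurable hDm
  have hf : (fun x => 1 / D x) =ᵐ[μ] fun x => (√(D x))⁻¹ ^ 2 := by
    filter_upwards [hD] with x hx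
    rw [inv_pow, Real.sq_sqrt hx.le, one_div]
  have hg : (fun x => D x * u x ^ 2) =ᵐ[μ] fun x => (√(D x) * |u x|) ^ 2 := by
    filter_upwards [hD] with x hx
    rw [mul_pow, Real.sq_sqrt hx.le, sq_abs]
  have hfg : (fun x => |u x|) =ᵐ[μ] fun x => (√(D x))⁻¹ * (√(D x) * |u x|) := by
    filter_upwards [hD] with x hx
    rw [inv_mul_cancel_left₀ (Real.sqrt_pos.2 hx).ne']
  rw [integral_congr_ae hf, integral_congr_ae hg, integral_congr_ae hfg]
  refine integral_mul_le_sqrt_mul_sqrt_of_nonneg (ae_of_all _ fun x => by positivity)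
    (ae_of_all _ fun x => by positivity) ?_ ?_
  · exact (memLp_two_iff_integrable_sq hsqrtD.aemeasurable.inv.aestronglyMeasurable).2
      (hDinv.congr hf)
  · exact (memLp_two_iff_integrable_sq (hsqrtD.mul hu.norm)).2 (hDu.congr hg)

end CauchySchwarz

namespace intervalIntegral

theorem integral_abs_le_sqrt_integral_inv_mul_sqrt_integral_mul_sq {a b : ℝ} (hab : a ≤ b)
    {D u : ℝ → ℝ} (hD : ∀ x ∈ Ioo a b, 0 < D x)
    (hDinv : IntervalIntegrable (fun x => 1 / D x) volume a b)
    (hDu : IntervalIntegrable (fun x => D x * u x ^ 2) volume a b)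
    (hu : IntervalIntegrable u volume a b) :
    ∫ x in a..b, |u x| ≤ √(∫ x in a..b, 1 / D x) * √(∫ x in a..b, D x * u x ^ 2) := by
  simp only [integral_of_le hab]
  refine _root_.integral_abs_le_sqrt_integral_inv_mul_sqrt_integral_mul_sq ?_ hDinv.1 hDu.1
    hu.1.aestronglyMeasurable
  rw [Measure.restrict_congr_set Ioo_ae_eq_Ioc.symm]
  exact (ae_restrict_iff' measurableSet_Ioo).2 (ae_of_all _ hD)

theorem integral_abs_le_sqrt_mul_sqrt_integral_sq {a b : ℝ} (hab : a ≤ b) {u : ℝ → ℝ}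
    (hu : IntervalIntegrable u volume a b)
    (hu2 : IntervalIntegrable (fun x => u x ^ 2) volume a b) :
    ∫ x in a..b, |u x| ≤ √(b - a) * √(∫ x in a..b, u x ^ 2) := by
  simpa [hab] using integral_abs_le_sqrt_integral_inv_mul_sqrt_integral_mul_sq (D := fun _ => 1)
    hab (fun _ _ => one_pos) intervalIntegrable_const (by simpa using hu2) hu

end intervalIntegral

section MeanValue

variable {a b : ℝ} {v v' : ℝ → ℝ}

theorem abs_sub_le_integral_abs_deriv (hv : ∀ x ∈ Icc a b, HasDerivAt v (v' x) x)
    (hv' : IntervalIntegrable v' volume a b) {y z : ℝ} (hy : y ∈ Icc a b) (hz : z ∈ Icc a b) :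
    |v z - v y| ≤ ∫ t in a..b, |v' t| := by
  wlog hyz : y ≤ z generalizing y z
  · rw [abs_sub_comm]
    exact this hz hy (le_of_not_ge hyz)
  have hsub : uIcc y z ⊆ Icc a b := uIcc_subset_Icc hy hz
  have hv'yz : IntervalIntegrable v' volume y z :=
    hv'.mono_set (by rwa [uIcc_of_le (hy.1.trans hy.2)])
  rw [← intervalIntegral.integral_eq_sub_of_hasDerivAt (fun x hx => hv x (hsub hx)) hv'yz]
  calc |∫ t in y..z, v' t| ≤ ∫ t in y..z, |v' t| :=
        intervalIntegral.abs_integral_le_integral_abs hyz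
    _ ≤ ∫ t in a..b, |v' t| :=
        intervalIntegral.integral_mono_interval hy.1 hyz hz.2
          (ae_of_all _ fun _ => abs_nonneg _) hv'.abs

theorem abs_le_integral_abs_div_add_integral_abs_deriv (hab : a < b)
    (hv : ∀ x ∈ Icc a b, HasDerivAt v (v' x) x) (hv' : IntervalIntegrable v' volume a b)
    {z : ℝ} (hz : z ∈ Icc a b) :
    |v z| ≤ (∫ t in a..b, |v t|) / (b - a) + ∫ t in a..b, |v' t| := by
  have hvc : ContinuousOn v (Icc a b) := fun x hx => (hv x hx).continuousAt.continuousWithinAt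
  have hvi : IntervalIntegrable (fun t => |v t|) volume a b :=
    hvc.abs.intervalIntegrable_of_Icc hab.le
  have hmean : ∫ _ in a..b, |v z| ≤ ∫ y in a..b, (|v y| + ∫ t in a..b, |v' t|) :=
    intervalIntegral.integral_mono_on hab.le intervalIntegrable_const
      (hvi.add intervalIntegrable_const) fun y hy => by
        linarith [abs_sub_le_integral_abs_deriv hv hv' hy hz, abs_sub_abs_le_abs_sub (v z) (v y)]
  rw [intervalIntegral.integral_const, intervalIntegral.integral_add hvi intervalIntegrable_const,
    intervalIntegral.integral_const, smul_eq_mul, smul_eq_mul] at hmean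
  rw [div_add' _ _ _ (sub_pos.2 hab).ne', le_div_iff₀ (sub_pos.2 hab)]
  linarith

end MeanValue

theorem stmt_0 (zF : ℝ) (hzF : 0 < zF) (D : ℝ → ℝ)
    (hDcont : ContinuousOn D (Set.Icc 0 zF))
    (hDpos : ∀ z ∈ Set.Ico 0 zF, 0 < D z)
    (hDint : IntervalIntegrable (fun z => 1 / D z) volume 0 zF)
    (v v' : ℝ → ℝ)
    (hv : ∀ z ∈ Set.Icc 0 zF, HasDerivAt v (v' z) z)
    (hv' : ContinuousOn v' (Set.Icc 0 zF))
    (z : ℝ) (hz : z ∈ Set.Icc 0 zF) :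
    |v z| ≤ (1 / Real.sqrt zF + 2 * IofD zF D) * normAlpha zF D v v' := by
  set S₁ := ∫ t in (0:ℝ)..zF, D t * v' t ^ 2
  set S₂ := ∫ t in (0:ℝ)..zF, v t ^ 2
  have hDpos' : ∀ x ∈ Ioo 0 zF, 0 < D x := fun x hx => hDpos x ⟨hx.1.le, hx.2⟩
  have hv'i : IntervalIntegrable v' volume 0 zF := hv'.intervalIntegrable_of_Icc hzF.le
  have hDv'i : IntervalIntegrable (fun t => D t * v' t ^ 2) volume 0 zF :=
    (hDcont.mul (hv'.pow 2)).intervalIntegrable_of_Icc hzF.le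
  have hvc : ContinuousOn v (Icc 0 zF) := fun x hx => (hv x hx).continuousAt.continuousWithinAt
  have hv'bound : ∫ t in (0:ℝ)..zF, |v' t| ≤ IofD zF D * √S₁ :=
    intervalIntegral.integral_abs_le_sqrt_integral_inv_mul_sqrt_integral_mul_sq hzF.le hDpos'
      hDint hDv'i hv'i
  have hvbound : ∫ t in (0:ℝ)..zF, |v t| ≤ √zF * √S₂ := by
    simpa using intervalIntegral.integral_abs_le_sqrt_mul_sqrt_integral_sq hzF.le
      (hvc.intervalIntegrable_of_Icc hzF.le) ((hvc.pow 2).intervalIntegrable_of_Icc hzF.le)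
  have hS₁ : 0 ≤ S₁ := by
    simpa using intervalIntegral.integral_mono_on_of_le_Ioo hzF.le intervalIntegrable_const hDv'i
      fun x hx => mul_nonneg (hDpos' x hx).le (sq_nonneg (v' x))
  have hS₂ : 0 ≤ S₂ := intervalIntegral.integral_nonneg hzF.le fun _ _ => sq_nonneg _
  have hS₁N : √S₁ ≤ normAlpha zF D v v' := Real.sqrt_le_sqrt (by linarith)
  have hS₂N : √S₂ ≤ normAlpha zF D v v' := Real.sqrt_le_sqrt (by linarith)
  calc |v z| ≤ (∫ t in (0:ℝ)..zF, |v t|) / zF + ∫ t in (0:ℝ)..zF, |v' t| := by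
        simpa using abs_le_integral_abs_div_add_integral_abs_deriv hzF hv hv'i hz
    _ ≤ √zF * √S₂ / zF + IofD zF D * √S₁ := by gcongr
    _ = 1 / √zF * √S₂ + IofD zF D * √S₁ := by
        rw [mul_div_right_comm, Real.sqrt_div_self']
    _ ≤ 1 / √zF * normAlpha zF D v v' + IofD zF D * normAlpha zF D v v' := by
        gcongr; exact Real.sqrt_nonneg _
    _ ≤ (1 / √zF + 2 * IofD zF D) * normAlpha zF D v v' := by
        have hIN : 0 ≤ IofD zF D * normAlpha zF D v v' :=
          mul_nonneg (Real.sqrt_nonneg _) (Real.sqrt_nonneg _)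
        linarith
end

section
/- Let z_F > 0, let D : ℝ → ℝ be continuous on [0,z_F] with D(z) > 0 for all z ∈ [0,z_F) and with 1/D integrable on (0,z_F), and set I(D) = (∫₀^{z_F} 1/D(z) dz)^{1/2}. Then for every continuously differentiable function v : ℝ → ℝ on [0,z_F], the boundary value satisfies |v(0)| ≤ (1/√z_F + I(D)) · ‖v‖_α, where ‖v‖_α = (∫₀^{z_F} D(z)·v'(z)² dz + ∫₀^{z_F} v(z)² dz)^{1/2}. -/
/-! By the fundamental theorem of calculus, `|v 0| ≤ |v x| + ∫₀^{z_F} |v'|` for every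
`x ∈ [0, z_F]`; averaging over `x` gives `z_F |v 0| ≤ ∫ |v| + z_F ∫ |v'|`.
Cauchy–Schwarz bounds `∫ |v|` by `√z_F (∫ v²)^{1/2}` and, writing
`|v'| = D^{-1/2} · (D v'²)^{1/2}`, bounds `∫ |v'|` by `I(D) (∫ D v'²)^{1/2}`;
both square roots are at most `‖v‖_α`. -/

open MeasureTheory

open Set

theorem integral_mul_le_sqrt_mul_sqrt_of_nonneg_s1 {α : Type*} [MeasurableSpace α] {μ : Measure α}
    {f g : α → ℝ} (hf0 : 0 ≤ᵐ[μ] f) (hg0 : 0 ≤ᵐ[μ] g)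
    (hfm : AEStronglyMeasurable f μ) (hgm : AEStronglyMeasurable g μ)
    (hf2 : Integrable (fun a => f a ^ 2) μ) (hg2 : Integrable (fun a => g a ^ 2) μ) :
    ∫ a, f a * g a ∂μ ≤ √(∫ a, f a ^ 2 ∂μ) * √(∫ a, g a ^ 2 ∂μ) := by
  have hp : ENNReal.ofReal 2 = 2 := by norm_num
  have h := integral_mul_le_Lp_mul_Lq_of_nonneg Real.HolderConjugate.two_two hf0 hg0
    (hp ▸ (memLp_two_iff_integrable_sq hfm).2 hf2)
    (hp ▸ (memLp_two_iff_integrable_sq hgm).2 hg2)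
  simpa only [Real.rpow_two, ← Real.sqrt_eq_rpow] using h

/-- Cauchy–Schwarz applied to `|g| = (1 / w)^{1/2} · (w g²)^{1/2}`. -/
theorem integral_abs_le_sqrt_integral_inv_mul_sqrt {α : Type*}
    [MeasurableSpace α] {μ : Measure α} {w g : α → ℝ} (hw : ∀ᵐ a ∂μ, 0 < w a)
    (hinv : Integrable (fun a => 1 / w a) μ) (hwg : Integrable (fun a => w a * g a ^ 2) μ) :
    ∫ a, |g a| ∂μ ≤ √(∫ a, 1 / w a ∂μ) * √(∫ a, w a * g a ^ 2 ∂μ) := by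
  have hinv0 : ∀ᵐ a ∂μ, 0 ≤ 1 / w a := hw.mono fun a ha => by positivity
  have hwg0 : ∀ᵐ a ∂μ, 0 ≤ w a * g a ^ 2 := hw.mono fun a ha => by positivity
  have key := integral_mul_le_sqrt_mul_sqrt_of_nonneg_s1 (μ := μ)
    (f := fun a => √(1 / w a)) (g := fun a => √(w a * g a ^ 2))
    (.of_forall fun _ => Real.sqrt_nonneg _) (.of_forall fun _ => Real.sqrt_nonneg _)
    (Real.continuous_sqrt.comp_aestronglyMeasurable hinv.aestronglyMeasurable)
    (Real.continuous_sqrt.comp_aestronglyMeasurable hwg.aestronglyMeasurable)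
    (hinv.congr (hinv0.mono fun a ha => (Real.sq_sqrt ha).symm))
    (hwg.congr (hwg0.mono fun a ha => (Real.sq_sqrt ha).symm))
  have hprod : (fun a => √(1 / w a) * √(w a * g a ^ 2)) =ᵐ[μ] fun a => |g a| :=
    hw.mono fun a ha => by
      dsimp only
      rw [← Real.sqrt_mul (by positivity), one_div, inv_mul_cancel_left₀ ha.ne',
        Real.sqrt_sq_eq_abs]
  rwa [integral_congr_ae hprod, integral_congr_ae (hinv0.mono fun a ha => Real.sq_sqrt ha),
    integral_congr_ae (hwg0.mono fun a ha => Real.sq_sqrt ha)] at key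

theorem ae_restrict_Ioc_of_forall_mem_Ioo {a b : ℝ} {p : ℝ → Prop}
    (h : ∀ x ∈ Ioo a b, p x) :
    ∀ᵐ x ∂volume.restrict (Ioc a b), p x := by
  rw [Measure.restrict_congr_set Ioo_ae_eq_Ioc.symm]
  exact ae_restrict_of_forall_mem measurableSet_Ioo h

theorem intervalIntegral_abs_le_sqrt_integral_inv_mul_sqrt {a b : ℝ} (hab : a ≤ b)
    {w g : ℝ → ℝ} (hw : ∀ x ∈ Ioo a b, 0 < w x)
    (hinv : IntervalIntegrable (fun x => 1 / w x) volume a b)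
    (hwg : IntervalIntegrable (fun x => w x * g x ^ 2) volume a b) :
    ∫ x in a..b, |g x| ≤ √(∫ x in a..b, 1 / w x) * √(∫ x in a..b, w x * g x ^ 2) := by
  simp only [intervalIntegral.integral_of_le hab]
  exact integral_abs_le_sqrt_integral_inv_mul_sqrt
    (ae_restrict_Ioc_of_forall_mem_Ioo hw) hinv.1 hwg.1

theorem abs_le_abs_add_integral_abs_deriv {v v' : ℝ → ℝ} {a b x : ℝ} (hx : x ∈ Icc a b)
    (hv : ∀ z ∈ Icc a b, HasDerivAt v (v' z) z) (hv' : ContinuousOn v' (Icc a b)) :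
    |v a| ≤ |v x| + ∫ t in a..b, |v' t| := by
  have hsub : uIcc a x ⊆ Icc a b := by
    rw [uIcc_of_le hx.1]; exact Icc_subset_Icc_right hx.2
  have hftc : ∫ t in a..x, v' t = v x - v a :=
    intervalIntegral.integral_eq_sub_of_hasDerivAt (fun t ht => hv t (hsub ht))
      ((hv'.mono hsub).intervalIntegrable)
  calc |v a| ≤ |v x| + |v x - v a| := by
        linarith [abs_sub_abs_le_abs_sub (v a) (v x), abs_sub_comm (v a) (v x)]
    _ ≤ |v x| + ∫ t in a..x, |v' t| := by
        gcongr; rw [← hftc]; exact intervalIntegral.abs_integral_le_integral_abs hx.1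
    _ ≤ |v x| + ∫ t in a..b, |v' t| := by
        gcongr
        exact intervalIntegral.integral_mono_interval le_rfl hx.1 hx.2
          (Filter.Eventually.of_forall fun _ => abs_nonneg _)
          (hv'.abs.mono (uIcc_of_le (hx.1.trans hx.2)).subset).intervalIntegrable

theorem sub_mul_abs_le_integral_abs_add {v v' : ℝ → ℝ} {a b : ℝ} (hab : a ≤ b)
    (hv : ∀ z ∈ Icc a b, HasDerivAt v (v' z) z) (hv' : ContinuousOn v' (Icc a b)) :
    (b - a) * |v a| ≤ (∫ x in a..b, |v x|) + (b - a) * ∫ t in a..b, |v' t| := by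
  have hvi : IntervalIntegrable (fun x => |v x|) volume a b :=
    ((HasDerivAt.continuousOn hv).abs.mono (uIcc_of_le hab).subset).intervalIntegrable
  have h := intervalIntegral.integral_mono_on hab intervalIntegrable_const
    (hvi.add intervalIntegrable_const) fun x hx => abs_le_abs_add_integral_abs_deriv hx hv hv'
  simpa [intervalIntegral.integral_add hvi intervalIntegrable_const] using h

theorem stmt_1 (zF : ℝ) (hzF : 0 < zF) (D : ℝ → ℝ)
    (hDcont : ContinuousOn D (Set.Icc 0 zF))
    (hDpos : ∀ z ∈ Set.Ico 0 zF, 0 < D z)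
    (hDint : IntervalIntegrable (fun z => 1 / D z) volume 0 zF)
    (v v' : ℝ → ℝ)
    (hv : ∀ z ∈ Set.Icc 0 zF, HasDerivAt v (v' z) z)
    (hv' : ContinuousOn v' (Set.Icc 0 zF)) :
    |v 0| ≤ (1 / Real.sqrt zF + IofD zF D) * normAlpha zF D v v' := by
  have hDpos' : ∀ x ∈ Ioo 0 zF, 0 < D x := fun x hx => hDpos x ⟨hx.1.le, hx.2⟩
  have hA : 0 ≤ ∫ t in (0:ℝ)..zF, D t * v' t ^ 2 := by
    rw [intervalIntegral.integral_of_le hzF.le]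
    exact integral_nonneg_of_ae <|
      (ae_restrict_Ioc_of_forall_mem_Ioo hDpos').mono fun x hx => by positivity
  set A := ∫ t in (0:ℝ)..zF, D t * v' t ^ 2
  set B := ∫ t in (0:ℝ)..zF, v t ^ 2
  have hB : 0 ≤ B := intervalIntegral.integral_nonneg hzF.le fun _ _ => sq_nonneg _
  have hN : normAlpha zF D v v' = √(A + B) := rfl
  have hv'_bound : ∫ t in (0:ℝ)..zF, |v' t| ≤ IofD zF D * √A :=
    intervalIntegral_abs_le_sqrt_integral_inv_mul_sqrt hzF.le hDpos' hDint
      ((hDcont.mul (hv'.pow 2)).mono (uIcc_of_le hzF.le).subset).intervalIntegrable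
  have hv_bound : ∫ t in (0:ℝ)..zF, |v t| ≤ √zF * √B := by
    have hv2 : IntervalIntegrable (fun t => 1 * v t ^ 2) volume 0 zF := by
      simp only [one_mul]
      exact ((HasDerivAt.continuousOn hv).pow 2 |>.mono
        (uIcc_of_le hzF.le).subset).intervalIntegrable
    simpa using intervalIntegral_abs_le_sqrt_integral_inv_mul_sqrt (w := fun _ => 1)
      hzF.le (fun _ _ => one_pos) intervalIntegrable_const hv2
  have hmean := sub_mul_abs_le_integral_abs_add hzF.le hv hv'
  rw [sub_zero] at hmean
  have hsA : √A ≤ √(A + B) := Real.sqrt_le_sqrt (by linarith)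
  have hsB : √B ≤ √(A + B) := Real.sqrt_le_sqrt (by linarith)
  have hI : 0 ≤ IofD zF D := Real.sqrt_nonneg _
  rw [hN, ← mul_le_mul_iff_right₀ hzF]
  calc zF * |v 0| ≤ √zF * √B + zF * (IofD zF D * √A) := by
        linarith [mul_le_mul_of_nonneg_left hv'_bound hzF.le]
    _ ≤ √zF * √(A + B) + zF * (IofD zF D * √(A + B)) := by gcongr
    _ = zF * ((1 / √zF + IofD zF D) * √(A + B)) := by
        field_simp
        linear_combination √(A + B) * Real.mul_self_sqrt hzF.le
end

section
/- Let z_F > 0, let D : ℝ → ℝ be continuous on [0,z_F] with D(z) > 0 for all z ∈ [0,z_F) and with 1/D integrable on (0,z_F), and let f, 𝒢, ℱ, M_α > 0 be real constants. Set Γ = (M_α/f)·(sup_{z∈[0,z_F]} D(z))^{1/2}, C₀ = (1/2)·min(𝒢/f, 1/f), and C₁ = Γ²/(2·min(𝒢/f, 1/f)). Then for every continuously differentiable v on [0,z_F] with v(0) = 0, the bilinear form satisfies 𝒜(v,v) ≥ C₀·‖v‖_α² − C₁·‖v‖₂², where ‖v‖₂ = (∫₀^{z_F} v(z)² dz)^{1/2}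 (weak coercivity of 𝒜). -/
open MeasureTheory

/-- The L² norm `‖v‖₂ = (∫₀^{z_F} v²)^{1/2}`. -/
noncomputable def normL2 (zF : ℝ) (v : ℝ → ℝ) : ℝ :=
  Real.sqrt (∫ t in (0:ℝ)..zF, (v t) ^ 2)

/-- The bilinear form
`𝒜(v,φ) = (𝒢/f)∫ vφ + (1/f)∫ D v'φ' + ℱ φ(z_F) v(z_F) − ℱ ∫ v φ' − (M_α/f) ∫ D v φ'`. -/
noncomputable def Abil (zF f Gc Fc Ma : ℝ) (D v v' φ φ' : ℝ → ℝ) : ℝ :=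
  (Gc / f) * (∫ t in (0:ℝ)..zF, v t * φ t)
    + (1 / f) * (∫ t in (0:ℝ)..zF, D t * v' t * φ' t)
    + Fc * (φ zF * v zF)
    - Fc * (∫ t in (0:ℝ)..zF, v t * φ' t)
    - (Ma / f) * (∫ t in (0:ℝ)..zF, D t * v t * φ' t)

/-!
Integrating `v v'` with `v 0 = 0` turns the convective terms into `ℱ v(z_F)²/2 ≥ 0`, and the
reaction and diffusion terms dominate `2 C₀ ‖v‖_α²`. Young's inequality together with
`D ≤ sup D` splits the drift term `(M_α/f) ∫ D v v'` into half of the diffusion bound plus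
`C₁ ‖v‖₂²`.
-/

open Set
open scoped Interval

lemma nonneg_on_Icc_of_pos_on_Ico {a b : ℝ} {D : ℝ → ℝ} (hab : a < b)
    (hD : ContinuousOn D (Icc a b)) (hpos : ∀ z ∈ Ico a b, 0 < D z) :
    ∀ z ∈ Icc a b, 0 ≤ D z := by
  intro z hz
  have hz' : z ∈ closure (Ico a b) := by rwa [closure_Ico hab.ne]
  exact continuousWithinAt_const.closure_le hz' ((hD z hz).mono Ico_subset_Icc_self)
    fun y hy => (hpos y hy).le

lemma weighted_young_of_le {m d S : ℝ} (hm : 0 < m) (hd : 0 ≤ d) (hdS : d ≤ S) (k x y : ℝ) :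
    k * (d * x * y) ≤ m / 2 * (d * y ^ 2) + k ^ 2 * S / (2 * m) * x ^ 2 := by
  have hyoung : 2 * m * (k * (d * x * y)) ≤ m ^ 2 * (d * y ^ 2) + k ^ 2 * S * x ^ 2 := by
    have hweight : k ^ 2 * d * x ^ 2 ≤ k ^ 2 * S * x ^ 2 := by gcongr
    nlinarith [mul_nonneg hd (sq_nonneg (m * y - k * x))]
  calc k * (d * x * y) = 2 * m * (k * (d * x * y)) / (2 * m) := by field_simp
    _ ≤ (m ^ 2 * (d * y ^ 2) + k ^ 2 * S * x ^ 2) / (2 * m) := by gcongr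
    _ = m / 2 * (d * y ^ 2) + k ^ 2 * S / (2 * m) * x ^ 2 := by field_simp

lemma integral_mul_deriv_self {a b : ℝ} {v v' : ℝ → ℝ}
    (hv : ∀ x ∈ [[a, b]], HasDerivAt v (v' x) x) (hv' : IntervalIntegrable v' volume a b) :
    ∫ x in a..b, v x * v' x = (v b ^ 2 - v a ^ 2) / 2 := by
  have h := intervalIntegral.integral_deriv_mul_eq_sub hv hv hv' hv'
  have hsum : (fun x => v' x * v x + v x * v' x) = fun x => 2 * (v x * v' x) := by
    ext x; ring
  rw [hsum, intervalIntegral.integral_const_mul] at h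
  linarith

lemma integral_weighted_young_of_le {a b m S k : ℝ} {D v v' : ℝ → ℝ} (hab : a ≤ b)
    (hm : 0 < m) (hD0 : ∀ t ∈ Icc a b, 0 ≤ D t) (hDS : ∀ t ∈ Icc a b, D t ≤ S)
    (hD : ContinuousOn D (Icc a b)) (hv : ContinuousOn v (Icc a b))
    (hv' : ContinuousOn v' (Icc a b)) :
    k * ∫ t in a..b, D t * v t * v' t ≤
      m / 2 * (∫ t in a..b, D t * v' t ^ 2) + k ^ 2 * S / (2 * m) * ∫ t in a..b, v t ^ 2 := by
  rw [← uIcc_of_le hab] at hD hv hv'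
  have hI2 : IntervalIntegrable (fun t => D t * v' t ^ 2) volume a b :=
    (hD.mul (hv'.pow 2)).intervalIntegrable
  have hI1 : IntervalIntegrable (fun t => v t ^ 2) volume a b := (hv.pow 2).intervalIntegrable
  calc k * ∫ t in a..b, D t * v t * v' t = ∫ t in a..b, k * (D t * v t * v' t) :=
        (intervalIntegral.integral_const_mul _ _).symm
    _ ≤ ∫ t in a..b, m / 2 * (D t * v' t ^ 2) + k ^ 2 * S / (2 * m) * v t ^ 2 :=
        intervalIntegral.integral_mono_on hab
          (((hD.mul hv).mul hv').intervalIntegrable.const_mul _)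
          ((hI2.const_mul _).add (hI1.const_mul _))
          fun t ht => weighted_young_of_le hm (hD0 t ht) (hDS t ht) k (v t) (v' t)
    _ = _ := by
        rw [intervalIntegral.integral_add (hI2.const_mul _) (hI1.const_mul _),
          intervalIntegral.integral_const_mul, intervalIntegral.integral_const_mul]

-- Since `v 0 = 0`, the convective term `ℱ ∫ v v'` cancels half of the boundary term.
lemma Abil_self_eq {zF f Gc Fc Ma : ℝ} {D v v' : ℝ → ℝ}
    (hv : ∀ z ∈ [[0, zF]], HasDerivAt v (v' z) z) (hv' : IntervalIntegrable v' volume 0 zF)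
    (hv0 : v 0 = 0) :
    Abil zF f Gc Fc Ma D v v' v v' =
      Gc / f * (∫ t in (0:ℝ)..zF, v t ^ 2) + 1 / f * (∫ t in (0:ℝ)..zF, D t * v' t ^ 2)
        + Fc / 2 * v zF ^ 2 - Ma / f * ∫ t in (0:ℝ)..zF, D t * v t * v' t := by
  have hsq : ∀ t, D t * v' t * v' t = D t * v' t ^ 2 := fun t => by ring
  rw [Abil, integral_mul_deriv_self hv hv', hv0]
  simp only [← sq, hsq]
  ring

theorem stmt_3_general (zF : ℝ) (hzF : 0 < zF) (D : ℝ → ℝ)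
    (hDcont : ContinuousOn D (Set.Icc 0 zF))
    (hDpos : ∀ z ∈ Set.Ico 0 zF, 0 < D z)
    (f Gc Fc Ma : ℝ) (hf : 0 < f) (hGc : 0 < Gc) (hFc : 0 < Fc)
    (Γ C₀ C₁ : ℝ)
    (hΓ : Γ = (Ma / f) * Real.sqrt (sSup (D '' Set.Icc 0 zF)))
    (hC₀ : C₀ = (1 / 2) * min (Gc / f) (1 / f))
    (hC₁ : C₁ = Γ ^ 2 / (2 * min (Gc / f) (1 / f)))
    (v v' : ℝ → ℝ)
    (hv : ∀ z ∈ Set.Icc 0 zF, HasDerivAt v (v' z) z)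
    (hv' : ContinuousOn v' (Set.Icc 0 zF))
    (hv0 : v 0 = 0) :
    Abil zF f Gc Fc Ma D v v' v v' ≥
      C₀ * (normAlpha zF D v v') ^ 2 - C₁ * (normL2 zF v) ^ 2 := by
  set m := min (Gc / f) (1 / f)
  have hm : 0 < m := lt_min (div_pos hGc hf) (div_pos one_pos hf)
  have hD0 := nonneg_on_Icc_of_pos_on_Ico hzF hDcont hDpos
  have hDS : ∀ t ∈ Icc 0 zF, D t ≤ sSup (D '' Icc 0 zF) := fun t ht =>
    le_csSup (isCompact_Icc.image_of_continuousOn hDcont).bddAbove (mem_image_of_mem D ht)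
  have h0 : (0 : ℝ) ∈ Icc 0 zF := left_mem_Icc.2 hzF.le
  have hC₁' : C₁ = (Ma / f) ^ 2 * sSup (D '' Icc 0 zF) / (2 * m) := by
    rw [hC₁, hΓ, mul_pow, Real.sq_sqrt ((hD0 0 h0).trans (hDS 0 h0))]
  have hvc : ContinuousOn v (Icc 0 zF) := fun t ht => (hv t ht).continuousAt.continuousWithinAt
  have hcross := integral_weighted_young_of_le (k := Ma / f) hzF.le hm hD0 hDS hDcont hvc hv'
  rw [← uIcc_of_le hzF.le] at hv hv'
  have hI1 : 0 ≤ ∫ t in (0:ℝ)..zF, v t ^ 2 :=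
    intervalIntegral.integral_nonneg hzF.le fun _ _ => sq_nonneg _
  have hI2 : 0 ≤ ∫ t in (0:ℝ)..zF, D t * v' t ^ 2 :=
    intervalIntegral.integral_nonneg hzF.le fun t ht => mul_nonneg (hD0 t ht) (sq_nonneg _)
  rw [ge_iff_le, Abil_self_eq hv hv'.intervalIntegrable hv0, normAlpha, normL2,
    Real.sq_sqrt (add_nonneg hI2 hI1), Real.sq_sqrt hI1, hC₀, hC₁']
  nlinarith [mul_le_mul_of_nonneg_right (min_le_left (Gc / f) (1 / f)) hI1,
    mul_le_mul_of_nonneg_right (min_le_right (Gc / f) (1 / f)) hI2,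
    mul_nonneg hFc.le (sq_nonneg (v zF))]

theorem stmt_3 (zF : ℝ) (hzF : 0 < zF) (D : ℝ → ℝ)
    (hDcont : ContinuousOn D (Set.Icc 0 zF))
    (hDpos : ∀ z ∈ Set.Ico 0 zF, 0 < D z)
    (hDint : IntervalIntegrable (fun z => 1 / D z) volume 0 zF)
    (f Gc Fc Ma : ℝ) (hf : 0 < f) (hGc : 0 < Gc) (hFc : 0 < Fc) (hMa : 0 < Ma)
    (Γ C₀ C₁ : ℝ)
    (hΓ : Γ = (Ma / f) * Real.sqrt (sSup (D '' Set.Icc 0 zF)))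
    (hC₀ : C₀ = (1 / 2) * min (Gc / f) (1 / f))
    (hC₁ : C₁ = Γ ^ 2 / (2 * min (Gc / f) (1 / f)))
    (v v' : ℝ → ℝ)
    (hv : ∀ z ∈ Set.Icc 0 zF, HasDerivAt v (v' z) z)
    (hv' : ContinuousOn v' (Set.Icc 0 zF))
    (hv0 : v 0 = 0) :
    Abil zF f Gc Fc Ma D v v' v v' ≥
      C₀ * (normAlpha zF D v v') ^ 2 - C₁ * (normL2 zF v) ^ 2 :=
  stmt_3_general zF hzF D hDcont hDpos f Gc Fc Ma hf hGc hFc Γ C₀ C₁ hΓ hC₀ hC₁ v v' hv hv' hv0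
end

section
/- Let z_F > 0, let D : ℝ → ℝ be continuous on [0,z_F] with D(z) > 0 for all z ∈ [0,z_F) and with 1/D integrable on (0,z_F), set I(D) = (∫₀^{z_F} 1/D(z) dz)^{1/2}, let f, 𝒢, ℱ, M_α > 0 be real constants, and let C = 𝒢/f + 1/f + ℱ·(1/√z_F + 2·I(D))² + ℱ·(1/√z_F + 2·I(D))·I(D) + (M_α/f)·(sup_{z∈[0,z_F]} D(z))^{1/2}. For real numbers r and r', define F(φ) = −r'·∫₀^{z_F} φ(z) dz − 𝒜(r·𝟙, φ), where r·𝟙 denotes the constant function with value r. Then for every continuously differentiable φ on [0,z_F], |F(φ)| ≤ √z_F·(|r'| + C·|r|)·‖φ‖_α. -/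
/-!
Because `r·𝟙` has zero derivative, `F(φ)` is a linear combination of `∫ φ`, `φ(z_F)`, `∫ φ'`
and `∫ D φ'`. The three integrals are bounded by `‖φ‖_α` through the Cauchy–Schwarz inequality:
`∫ φ` against `1`, `∫ φ'` against the weights `1/D` and `D` (which is where `I(D)` enters),
`∫ D φ'` against `D ≤ sup D`. The trace `φ(z_F)` is controlled by averaging
`φ(z_F) = φ(t) + ∫_t^{z_F} φ'` over `t ∈ [0, z_F]`. The constant `C` dominates the coefficients
that result.
-/

open MeasureTheory

/-- `F(φ) = −r'·∫₀^{z_F} φ − 𝒜(r·𝟙, φ)`, where the constant function `r·𝟙` has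
derivative `0`. -/
noncomputable def Ffun (zF f Gc Fc Ma : ℝ) (D : ℝ → ℝ) (r r' : ℝ) (φ φ' : ℝ → ℝ) : ℝ :=
  -r' * (∫ t in (0:ℝ)..zF, φ t)
    - Abil zF f Gc Fc Ma D (fun _ => r) (fun _ => 0) φ φ'

open Set

section CauchySchwarz

variable {α : Type*} [MeasurableSpace α] {μ : Measure α}

theorem sq_integral_mul_le_integral_sq_mul_integral_sq {f g : α → ℝ}
    (hf : Integrable (fun x => f x ^ 2) μ) (hg : Integrable (fun x => g x ^ 2) μ)
    (hfg : Integrable (fun x => f x * g x) μ) :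
    (∫ x, f x * g x ∂μ) ^ 2 ≤ (∫ x, f x ^ 2 ∂μ) * ∫ x, g x ^ 2 ∂μ := by
  -- `t ↦ ∫ (t f + g)²` is a nonnegative quadratic, so its discriminant is nonpositive.
  have hquad : ∀ t : ℝ, 0 ≤ (∫ x, f x ^ 2 ∂μ) * (t * t) + 2 * (∫ x, f x * g x ∂μ) * t
      + ∫ x, g x ^ 2 ∂μ := by
    intro t
    have hexpand : ∫ x, (t * f x + g x) ^ 2 ∂μ
        = t ^ 2 * (∫ x, f x ^ 2 ∂μ) + (2 * t * (∫ x, f x * g x ∂μ) + ∫ x, g x ^ 2 ∂μ) := by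
      have hpt : ∀ x, (t * f x + g x) ^ 2 = t ^ 2 * f x ^ 2 + (2 * t * (f x * g x) + g x ^ 2) :=
        fun x => by ring
      simp_rw [hpt]
      have hfg' : Integrable (fun x => 2 * t * (f x * g x) + g x ^ 2) μ :=
        (hfg.const_mul _).add hg
      rw [integral_add (hf.const_mul _) hfg', integral_add (hfg.const_mul _) hg,
        integral_const_mul, integral_const_mul]
    have hnonneg : 0 ≤ ∫ x, (t * f x + g x) ^ 2 ∂μ := integral_nonneg fun x => sq_nonneg _
    nlinarith
  have hdiscr := discrim_le_zero hquad
  rw [discrim] at hdiscr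
  nlinarith

theorem sq_integral_mul_le_integral_mul_integral_mul_sq {w g : α → ℝ} (hw : 0 ≤ᵐ[μ] w)
    (hwi : Integrable w μ) (hwg : Integrable (fun x => w x * g x) μ)
    (hwg2 : Integrable (fun x => w x * g x ^ 2) μ) :
    (∫ x, w x * g x ∂μ) ^ 2 ≤ (∫ x, w x ∂μ) * ∫ x, w x * g x ^ 2 ∂μ := by
  have e1 : (fun x => √(w x) ^ 2) =ᵐ[μ] w := hw.mono fun x hx => Real.sq_sqrt hx
  have e2 : (fun x => √(w x) * (√(w x) * g x)) =ᵐ[μ] fun x => w x * g x :=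
    hw.mono fun x hx => by dsimp only; rw [← mul_assoc, Real.mul_self_sqrt hx]
  have e3 : (fun x => (√(w x) * g x) ^ 2) =ᵐ[μ] fun x => w x * g x ^ 2 :=
    hw.mono fun x hx => by dsimp only; rw [mul_pow, Real.sq_sqrt hx]
  have h := sq_integral_mul_le_integral_sq_mul_integral_sq (hwi.congr e1.symm)
    (hwg2.congr e3.symm) (hwg.congr e2.symm)
  rwa [integral_congr_ae e1, integral_congr_ae e2, integral_congr_ae e3] at h

theorem sq_integral_le_integral_inv_mul_integral_mul_sq {w g : α → ℝ} (hw : ∀ᵐ x ∂μ, 0 < w x)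
    (hwi : Integrable (fun x => (w x)⁻¹) μ) (hg : Integrable g μ)
    (hwg2 : Integrable (fun x => w x * g x ^ 2) μ) :
    (∫ x, g x ∂μ) ^ 2 ≤ (∫ x, (w x)⁻¹ ∂μ) * ∫ x, w x * g x ^ 2 ∂μ := by
  have e1 : (fun x => (√(w x))⁻¹ ^ 2) =ᵐ[μ] fun x => (w x)⁻¹ :=
    hw.mono fun x hx => by dsimp only; rw [inv_pow, Real.sq_sqrt hx.le]
  have e2 : (fun x => (√(w x))⁻¹ * (√(w x) * g x)) =ᵐ[μ] g :=
    hw.mono fun x hx => inv_mul_cancel_left₀ (Real.sqrt_pos.2 hx).ne' _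
  have e3 : (fun x => (√(w x) * g x) ^ 2) =ᵐ[μ] fun x => w x * g x ^ 2 :=
    hw.mono fun x hx => by dsimp only; rw [mul_pow, Real.sq_sqrt hx.le]
  have h := sq_integral_mul_le_integral_sq_mul_integral_sq (hwi.congr e1.symm)
    (hwg2.congr e3.symm) (hg.congr e2.symm)
  rwa [integral_congr_ae e1, integral_congr_ae e2, integral_congr_ae e3] at h

end CauchySchwarz

theorem abs_intervalIntegral_le_sqrt_mul_sqrt {a b : ℝ} (hab : a ≤ b) {g : ℝ → ℝ}
    (hg : IntervalIntegrable g volume a b)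
    (hg2 : IntervalIntegrable (fun x => g x ^ 2) volume a b) :
    |∫ x in a..b, g x| ≤ √(b - a) * √(∫ x in a..b, g x ^ 2) := by
  have h := sq_integral_mul_le_integral_sq_mul_integral_sq (μ := volume.restrict (Ioc a b))
    (f := fun _ => 1) (by simp) hg2.1 (by simp only [one_mul]; exact hg.1)
  simp only [one_mul, one_pow, integral_const, measureReal_restrict_apply_univ,
    Real.volume_real_Ioc_of_le hab, smul_eq_mul, mul_one] at h
  rw [intervalIntegral.integral_of_le hab, intervalIntegral.integral_of_le hab,
    ← Real.sqrt_mul (sub_nonneg.2 hab)]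
  exact Real.abs_le_sqrt h

theorem abs_intervalIntegral_le_sqrt_integral_inv_mul_sqrt {a b c : ℝ} (hac : a ≤ c)
    (hcb : c ≤ b) {w g : ℝ → ℝ} (hw : ∀ x ∈ Ioo a b, 0 < w x)
    (hwi : IntervalIntegrable (fun x => (w x)⁻¹) volume a b)
    (hg : IntervalIntegrable g volume a b)
    (hwg2 : IntervalIntegrable (fun x => w x * g x ^ 2) volume a b) :
    |∫ x in c..b, g x| ≤ √(∫ x in a..b, (w x)⁻¹) * √(∫ x in a..b, w x * g x ^ 2) := by
  have hab := hac.trans hcb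
  have hsub : uIcc c b ⊆ uIcc a b := uIcc_subset_uIcc (mem_uIcc_of_le hac hcb) right_mem_uIcc
  have hpos_ab := ae_restrict_Ioc_of_forall_mem_Ioo hw
  have hinv_nonneg : 0 ≤ᵐ[volume.restrict (Ioc a b)] fun x => (w x)⁻¹ :=
    hpos_ab.mono fun x hx => (inv_pos.2 hx).le
  have hwg2_nonneg : 0 ≤ᵐ[volume.restrict (Ioc a b)] fun x => w x * g x ^ 2 :=
    hpos_ab.mono fun x hx => mul_nonneg hx.le (sq_nonneg _)
  have hpos_cb := ae_restrict_Ioc_of_forall_mem_Ioo fun x (hx : x ∈ Ioo c b) =>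
    hw x ⟨hac.trans_lt hx.1, hx.2⟩
  have h := sq_integral_le_integral_inv_mul_integral_mul_sq hpos_cb (hwi.mono_set hsub).1
    (hg.mono_set hsub).1 (hwg2.mono_set hsub).1
  simp only [← intervalIntegral.integral_of_le hcb] at h
  refine (Real.abs_le_sqrt (h.trans (mul_le_mul ?_ ?_ ?_ ?_))).trans_eq (Real.sqrt_mul ?_ _)
  · exact intervalIntegral.integral_mono_interval hac hcb le_rfl hinv_nonneg hwi
  · exact intervalIntegral.integral_mono_interval hac hcb le_rfl hwg2_nonneg hwg2
  · rw [intervalIntegral.integral_of_le hcb]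
    exact setIntegral_nonneg_of_ae_restrict
      (hpos_cb.mono fun x hx => mul_nonneg hx.le (sq_nonneg _))
  all_goals
    rw [intervalIntegral.integral_of_le hab]
    exact setIntegral_nonneg_of_ae_restrict hinv_nonneg

section Estimates

variable {zF : ℝ} {D φ φ' : ℝ → ℝ}

theorem sqrt_integral_sq_le_normAlpha (hzF : 0 ≤ zF) (hD : ∀ x ∈ Ioo 0 zF, 0 ≤ D x) :
    √(∫ t in (0:ℝ)..zF, φ t ^ 2) ≤ normAlpha zF D φ φ' := by
  refine Real.sqrt_le_sqrt (le_add_of_nonneg_left ?_)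
  rw [intervalIntegral.integral_of_le hzF]
  exact setIntegral_nonneg_of_ae_restrict
    (ae_restrict_Ioc_of_forall_mem_Ioo fun x hx => mul_nonneg (hD x hx) (sq_nonneg _))

theorem sqrt_integral_mul_sq_le_normAlpha (hzF : 0 ≤ zF) :
    √(∫ t in (0:ℝ)..zF, D t * φ' t ^ 2) ≤ normAlpha zF D φ φ' :=
  Real.sqrt_le_sqrt
    (le_add_of_nonneg_right (intervalIntegral.integral_nonneg hzF fun _ _ => sq_nonneg _))

theorem abs_integral_le_IofD_mul (hDcont : ContinuousOn D (Icc 0 zF))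
    (hDpos : ∀ z ∈ Ioo 0 zF, 0 < D z) (hDint : IntervalIntegrable (fun z => 1 / D z) volume 0 zF)
    (hφ' : ContinuousOn φ' (Icc 0 zF)) {c : ℝ} (hc : c ∈ Icc 0 zF) :
    |∫ t in c..zF, φ' t| ≤ IofD zF D * √(∫ t in (0:ℝ)..zF, D t * φ' t ^ 2) := by
  have hzF := hc.1.trans hc.2
  simp only [IofD, one_div] at hDint ⊢
  exact abs_intervalIntegral_le_sqrt_integral_inv_mul_sqrt hc.1 hc.2 hDpos hDint
    (hφ'.intervalIntegrable_of_Icc hzF) ((hDcont.mul (hφ'.pow 2)).intervalIntegrable_of_Icc hzF)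

theorem abs_integral_mul_le (hzF : 0 ≤ zF) (hDcont : ContinuousOn D (Icc 0 zF))
    (hD : ∀ z ∈ Ioo 0 zF, 0 ≤ D z) (hφ' : ContinuousOn φ' (Icc 0 zF)) :
    |∫ t in (0:ℝ)..zF, D t * φ' t| ≤
      √zF * √(sSup (D '' Icc 0 zF)) * √(∫ t in (0:ℝ)..zF, D t * φ' t ^ 2) := by
  have hDi : IntervalIntegrable D volume 0 zF := hDcont.intervalIntegrable_of_Icc hzF
  have hQ : 0 ≤ ∫ t in (0:ℝ)..zF, D t * φ' t ^ 2 := by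
    rw [intervalIntegral.integral_of_le hzF]
    exact setIntegral_nonneg_of_ae_restrict
      (ae_restrict_Ioc_of_forall_mem_Ioo fun x hx => mul_nonneg (hD x hx) (sq_nonneg _))
  have hCS := sq_integral_mul_le_integral_mul_integral_mul_sq
    (ae_restrict_Ioc_of_forall_mem_Ioo hD) hDi.1
    ((hDcont.mul hφ').intervalIntegrable_of_Icc hzF).1
    ((hDcont.mul (hφ'.pow 2)).intervalIntegrable_of_Icc hzF).1
  simp only [← intervalIntegral.integral_of_le hzF] at hCS
  have hbdd : BddAbove (D '' Icc 0 zF) := (isCompact_Icc.image_of_continuousOn hDcont).bddAbove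
  have hDle : ∫ t in (0:ℝ)..zF, D t ≤ zF * sSup (D '' Icc 0 zF) := by
    simpa using intervalIntegral.integral_mono_on hzF hDi intervalIntegrable_const
      fun x hx => le_csSup hbdd (mem_image_of_mem D hx)
  calc |∫ t in (0:ℝ)..zF, D t * φ' t|
      ≤ √((zF * sSup (D '' Icc 0 zF)) * ∫ t in (0:ℝ)..zF, D t * φ' t ^ 2) :=
        Real.abs_le_sqrt (hCS.trans (mul_le_mul_of_nonneg_right hDle hQ))
    _ = _ := by rw [Real.sqrt_mul' _ hQ, Real.sqrt_mul hzF]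

theorem abs_trace_le (hzF : 0 < zF) (hDcont : ContinuousOn D (Icc 0 zF))
    (hDpos : ∀ z ∈ Ioo 0 zF, 0 < D z) (hDint : IntervalIntegrable (fun z => 1 / D z) volume 0 zF)
    (hφ : ∀ z ∈ Icc 0 zF, HasDerivAt φ (φ' z) z) (hφ' : ContinuousOn φ' (Icc 0 zF)) :
    |φ zF| ≤ √(∫ t in (0:ℝ)..zF, φ t ^ 2) / √zF
      + IofD zF D * √(∫ t in (0:ℝ)..zF, D t * φ' t ^ 2) := by
  set K := IofD zF D * √(∫ t in (0:ℝ)..zF, D t * φ' t ^ 2)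
  have hφc : ContinuousOn φ (Icc 0 zF) := fun z hz => (hφ z hz).continuousAt.continuousWithinAt
  have hφi : IntervalIntegrable φ volume 0 zF := hφc.intervalIntegrable_of_Icc hzF.le
  have hdiff : ∀ t ∈ Ioc 0 zF, ‖φ zF - φ t‖ ≤ K := by
    intro t ht
    have hsub : uIcc t zF ⊆ Icc 0 zF :=
      uIcc_subset_Icc (Ioc_subset_Icc_self ht) (right_mem_Icc.2 hzF.le)
    rw [Real.norm_eq_abs, ← intervalIntegral.integral_eq_sub_of_hasDerivAt
      (fun x hx => hφ x (hsub hx)) ((hφ'.mono hsub).intervalIntegrable)]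
    exact abs_integral_le_IofD_mul hDcont hDpos hDint hφ' (Ioc_subset_Icc_self ht)
  -- Average the identity `φ zF = φ t + (φ zF - φ t)` over `t ∈ [0, zF]`.
  have hsplit : zF * φ zF = (∫ t in (0:ℝ)..zF, φ t) + ∫ t in (0:ℝ)..zF, (φ zF - φ t) := by
    rw [← intervalIntegral.integral_add hφi (intervalIntegrable_const.sub hφi)]
    simp
  have hmean := abs_intervalIntegral_le_sqrt_mul_sqrt hzF.le hφi
    ((hφc.pow 2).intervalIntegrable_of_Icc hzF.le)
  rw [sub_zero] at hmean
  have hosc : |∫ t in (0:ℝ)..zF, (φ zF - φ t)| ≤ K * zF := by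
    simpa [abs_of_pos hzF] using intervalIntegral.norm_integral_le_of_norm_le_const
      (fun t ht => hdiff t (uIoc_of_le hzF.le ▸ ht))
  refine le_of_mul_le_mul_left ?_ hzF
  calc zF * |φ zF| = |zF * φ zF| := by rw [abs_mul, abs_of_pos hzF]
    _ ≤ √zF * √(∫ t in (0:ℝ)..zF, φ t ^ 2) + K * zF :=
        hsplit ▸ (abs_add_le _ _).trans (add_le_add hmean hosc)
    _ = zF * (√(∫ t in (0:ℝ)..zF, φ t ^ 2) / √zF + K) := by
        have hs : √zF ≠ 0 := (Real.sqrt_pos.2 hzF).ne'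
        field_simp
        linear_combination (√(∫ t in (0:ℝ)..zF, φ t ^ 2)) * Real.mul_self_sqrt hzF.le

end Estimates

theorem Ffun_eq (zF f Gc Fc Ma : ℝ) (D : ℝ → ℝ) (r r' : ℝ) (φ φ' : ℝ → ℝ) :
    Ffun zF f Gc Fc Ma D r r' φ φ' =
      -(r' + Gc / f * r) * (∫ t in (0:ℝ)..zF, φ t) - Fc * r * φ zF
        + Fc * r * (∫ t in (0:ℝ)..zF, φ' t) + Ma / f * r * ∫ t in (0:ℝ)..zF, D t * φ' t := by
  simp only [Ffun, Abil, mul_zero, zero_mul, intervalIntegral.integral_zero, mul_right_comm _ r,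
    intervalIntegral.integral_const_mul, intervalIntegral.integral_mul_const]
  ring

theorem abs_Ffun_le {f Gc Fc Ma : ℝ} (hf : 0 < f) (hGc : 0 ≤ Gc) (hFc : 0 ≤ Fc) (hMa : 0 ≤ Ma)
    (zF : ℝ) (D : ℝ → ℝ) (r r' : ℝ) (φ φ' : ℝ → ℝ) :
    |Ffun zF f Gc Fc Ma D r r' φ φ'| ≤
      (|r'| + Gc / f * |r|) * |∫ t in (0:ℝ)..zF, φ t| + Fc * |r| * |φ zF|
        + Fc * |r| * |∫ t in (0:ℝ)..zF, φ' t| + Ma / f * |r| * |∫ t in (0:ℝ)..zF, D t * φ' t| := by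
  rw [Ffun_eq]
  set A := ∫ t in (0:ℝ)..zF, φ t
  set B := ∫ t in (0:ℝ)..zF, φ' t
  set E := ∫ t in (0:ℝ)..zF, D t * φ' t
  calc _ ≤ |-(r' + Gc / f * r) * A| + |Fc * r * φ zF| + |Fc * r * B| + |Ma / f * r * E| := by
        grind [abs_add_le, abs_sub]
    _ ≤ _ := by
        simp only [abs_mul, abs_neg, abs_div, abs_of_nonneg hFc,
          abs_of_nonneg hMa, abs_of_pos hf]
        gcongr
        exact (abs_add_le _ _).trans_eq (by rw [abs_mul, abs_div, abs_of_nonneg hGc, abs_of_pos hf])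

theorem coeff_sum_le_mul_const {s I S f Gc Fc Ma : ℝ} (hs : 0 < s) (hI : 0 ≤ I) (hf : 0 < f)
    (hFc : 0 ≤ Fc) :
    s * (Gc / f) + Fc * (1 / s + 2 * I) + s * (Ma / f) * S ≤
      s * (Gc / f + 1 / f + Fc * (1 / s + 2 * I) ^ 2 + Fc * (1 / s + 2 * I) * I + Ma / f * S) := by
  have hu : s * (1 / s + 2 * I) - 1 = 2 * s * I := by field_simp; ring
  have hslack : 0 ≤ s * (1 / f) + Fc * (1 / s + 2 * I) * (s * (1 / s + 2 * I) - 1)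
      + Fc * (s * (1 / s + 2 * I)) * I := by
    rw [hu]; positivity
  linear_combination hslack

theorem stmt_4 (zF : ℝ) (hzF : 0 < zF) (D : ℝ → ℝ)
    (hDcont : ContinuousOn D (Set.Icc 0 zF))
    (hDpos : ∀ z ∈ Set.Ico 0 zF, 0 < D z)
    (hDint : IntervalIntegrable (fun z => 1 / D z) volume 0 zF)
    (f Gc Fc Ma : ℝ) (hf : 0 < f) (hGc : 0 < Gc) (hFc : 0 < Fc) (hMa : 0 < Ma)
    (C : ℝ)
    (hC : C = Gc / f + 1 / f + Fc * (1 / Real.sqrt zF + 2 * IofD zF D) ^ 2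
        + Fc * (1 / Real.sqrt zF + 2 * IofD zF D) * IofD zF D
        + (Ma / f) * Real.sqrt (sSup (D '' Set.Icc 0 zF)))
    (r r' : ℝ)
    (φ φ' : ℝ → ℝ)
    (hφ : ∀ z ∈ Set.Icc 0 zF, HasDerivAt φ (φ' z) z)
    (hφ' : ContinuousOn φ' (Set.Icc 0 zF)) :
    |Ffun zF f Gc Fc Ma D r r' φ φ'| ≤
      Real.sqrt zF * (|r'| + C * |r|) * normAlpha zF D φ φ' := by
  have hD : ∀ z ∈ Ioo 0 zF, 0 < D z := fun z hz => hDpos z (Ioo_subset_Ico_self hz)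
  have hD0 : ∀ z ∈ Ioo 0 zF, 0 ≤ D z := fun z hz => (hD z hz).le
  have hs : 0 < √zF := Real.sqrt_pos.2 hzF
  have hI : 0 ≤ IofD zF D := Real.sqrt_nonneg _
  have hφc : ContinuousOn φ (Icc 0 zF) := fun z hz => (hφ z hz).continuousAt.continuousWithinAt
  set N := normAlpha zF D φ φ'
  have hB : √(∫ t in (0:ℝ)..zF, φ t ^ 2) ≤ N := sqrt_integral_sq_le_normAlpha hzF.le hD0
  have hQ : √(∫ t in (0:ℝ)..zF, D t * φ' t ^ 2) ≤ N := sqrt_integral_mul_sq_le_normAlpha hzF.le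
  have hmean := abs_intervalIntegral_le_sqrt_mul_sqrt hzF.le (hφc.intervalIntegrable_of_Icc hzF.le)
    ((hφc.pow 2).intervalIntegrable_of_Icc hzF.le)
  rw [sub_zero] at hmean
  calc _ ≤ (|r'| + Gc / f * |r|) * (√zF * N) + Fc * |r| * (N / √zF + IofD zF D * N)
        + Fc * |r| * (IofD zF D * N) + Ma / f * |r| * (√zF * √(sSup (D '' Icc 0 zF)) * N) := by
        refine (abs_Ffun_le hf hGc.le hFc.le hMa.le zF D r r' φ φ').trans ?_
        gcongr
        · exact hmean.trans (by gcongr)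
        · exact (abs_trace_le hzF hDcont hD hDint hφ hφ').trans (by gcongr)
        · exact (abs_integral_le_IofD_mul hDcont hD hDint hφ' (left_mem_Icc.2 hzF.le)).trans
            (by gcongr)
        · exact (abs_integral_mul_le hzF.le hDcont hD0 hφ').trans (by gcongr)
    _ = √zF * N * |r'| + |r| * N * (√zF * (Gc / f) + Fc * (1 / √zF + 2 * IofD zF D)
          + √zF * (Ma / f) * √(sSup (D '' Icc 0 zF))) := by ring
    _ ≤ √zF * N * |r'| + |r| * N * (√zF * C) := by
        have hN : 0 ≤ N := Real.sqrt_nonneg _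
        gcongr
        rw [hC]
        exact coeff_sum_le_mul_const hs hI hf hFc.le
    _ = _ := by ring
end

section
/- Let m ≥ 1, n = m+1, and let D ∈ ℝⁿ have entries D_1,…,D_n. Let A(D) ∈ ℝ^{m×m} be the tridiagonal matrix with A(D)_{ii} = (D_i − D_{i+2})/4 for 1 ≤ i ≤ m−1, A(D)_{mm} = (D_m + D_{m+1})/4, A(D)_{i,i+1} = (D_{i+1} + D_{i+2})/4 and A(D)_{i+1,i} = −(D_{i+1} + D_{i+2})/4 for 1 ≤ i ≤ m−1, and all other entries zero. Then for every v ∈ ℝ^m, 4·vᵀA(D)v = Σ_{i=1}^{m−1}(D_i − D_{i+2})·v_i² + (D_m + D_{m+1})·v_m². Consequently, if D_i > 0 for all 1 ≤ i ≤ n and D_i > D_{i+2} for all 1 ≤ i ≤ n−2, then vᵀA(D)v > 0 for every nonzero v ∈ ℝ^m. -/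
open Matrix Finset

/-- 1-based access to the entries of a finite vector, with value `0` at index `0`
and out of range. -/
def pad1 {n : ℕ} (v : Fin n → ℝ) : ℕ → ℝ :=
  fun k => if hk : k - 1 < n then (if k = 0 then 0 else v ⟨k - 1, hk⟩) else 0

/-- The tridiagonal matrix `A(D)` (1-based mathematical indexing, entries `d 1, …`):
`A_{ii} = (D_i − D_{i+2})/4` for `i < m`, `A_{mm} = (D_m + D_{m+1})/4`,
`A_{i,i+1} = (D_{i+1} + D_{i+2})/4`, `A_{i+1,i} = −(D_{i+1} + D_{i+2})/4`. -/
noncomputable def matA (m : ℕ) (d : ℕ → ℝ) : Matrix (Fin m) (Fin m) ℝ :=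
  Matrix.of fun i j =>
    if i = j then
      (if i.val + 1 = m then (d m + d (m + 1)) / 4
       else (d (i.val + 1) - d (i.val + 3)) / 4)
    else if i.val + 1 = j.val then (d (i.val + 2) + d (i.val + 3)) / 4
    else if j.val + 1 = i.val then -((d (j.val + 2) + d (j.val + 3)) / 4)
    else 0

/-! The off-diagonal part of `A(D)` is skew-symmetric, so it contributes nothing to the quadratic
form: `vᵀ A(D) v = ∑ᵢ A(D)ᵢᵢ vᵢ²`. Both claims are read off this identity; under the hypotheses
every diagonal entry is positive. -/

namespace Matrix

variable {n R : Type*} [Fintype n] [CommRing R]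

theorem dotProduct_mulVec_self_eq_zero {B : Matrix n n R}
    (hB : ∀ i j, i ≠ j → B j i = -B i j) (hdiag : ∀ i, B i i = 0) (v : n → R) :
    v ⬝ᵥ B *ᵥ v = 0 := by
  simp only [dotProduct, mulVec, Finset.mul_sum]
  rw [← Fintype.sum_prod_type']
  refine Finset.sum_ninvolution Prod.swap (fun ⟨i, j⟩ => ?_) (fun ⟨i, j⟩ hne hij => ?_)
    (fun _ => Finset.mem_univ _) Prod.swap_swap
  · rcases eq_or_ne i j with rfl | hij
    · simp [hdiag]
    · simp only [Prod.swap_prod_mk, hB i j hij]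
      ring
  · obtain rfl : j = i := congrArg Prod.fst hij
    simp [hdiag] at hne

theorem dotProduct_mulVec_self_eq_sum_diag [DecidableEq n] {A : Matrix n n R}
    (hA : ∀ i j, i ≠ j → A j i = -A i j) (v : n → R) :
    v ⬝ᵥ A *ᵥ v = ∑ i, A i i * v i ^ 2 := by
  have hskew : v ⬝ᵥ (A - diagonal A.diag) *ᵥ v = 0 :=
    dotProduct_mulVec_self_eq_zero (fun i j hij => by simp [hA i j hij, hij, hij.symm])
      (fun i => by simp) v
  rw [sub_mulVec, dotProduct_sub, sub_eq_zero] at hskew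
  rw [hskew]
  simp only [dotProduct, mulVec_diagonal, diag_apply]
  exact Finset.sum_congr rfl fun i _ => by ring

end Matrix

theorem Finset.sum_Icc_one_eq_sum_fin {M : Type*} [AddCommMonoid M] (f : ℕ → M) (m : ℕ) :
    ∑ k ∈ Icc 1 m, f k = ∑ i : Fin m, f (i + 1) := by
  rw [Fin.sum_univ_eq_sum_range (fun i => f (i + 1)), range_eq_Ico, sum_Ico_add',
    Ico_add_one_right_eq_Icc]

theorem Finset.sum_mul_sq_pos {ι R : Type*} [Fintype ι] [Ring R] [LinearOrder R]
    [IsStrictOrderedRing R] {c v : ι → R} (hc : ∀ i, 0 < c i) (hv : v ≠ 0) :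
    0 < ∑ i, c i * v i ^ 2 := by
  obtain ⟨i, hi⟩ := Function.ne_iff.mp hv
  exact Finset.sum_pos' (fun j _ => by have := hc j; positivity)
    ⟨i, Finset.mem_univ _, mul_pos (hc i) (sq_pos_of_ne_zero hi)⟩

theorem pad1_succ {n : ℕ} (v : Fin n → ℝ) (i : Fin n) : pad1 v (i + 1) = v i := by
  simp [pad1]

theorem pad1_nonneg {n : ℕ} {v : Fin n → ℝ} (hv : ∀ i, 0 ≤ v i) (k : ℕ) : 0 ≤ pad1 v k := by
  unfold pad1
  split_ifs <;> simp [hv]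

theorem matA_apply_self {m : ℕ} (d : ℕ → ℝ) (i : Fin m) :
    matA m d i i = if i.val + 1 = m then (d m + d (m + 1)) / 4
      else (d (i.val + 1) - d (i.val + 3)) / 4 := by
  simp [matA]

theorem matA_apply_swap {m : ℕ} (d : ℕ → ℝ) {i j : Fin m} (hij : i ≠ j) :
    matA m d j i = -matA m d i j := by
  have hij' : (i : ℕ) ≠ j := Fin.val_ne_of_ne hij
  simp only [matA, of_apply, if_neg hij, if_neg hij.symm]
  split_ifs <;> first | omega | ring

theorem four_mul_dotProduct_matA_mulVec (m : ℕ) (d : ℕ → ℝ) (v : Fin m → ℝ) :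
    4 * (v ⬝ᵥ matA m d *ᵥ v) =
      ∑ i ∈ Icc 1 (m - 1), (d i - d (i + 2)) * pad1 v i ^ 2 + (d m + d (m + 1)) * pad1 v m ^ 2 := by
  rcases m with _ | m
  · simp [pad1]
  rw [dotProduct_mulVec_self_eq_sum_diag (fun _ _ => matA_apply_swap d), Finset.mul_sum,
    Fin.sum_univ_castSucc, Nat.add_sub_cancel, Finset.sum_Icc_one_eq_sum_fin]
  congr 1
  · refine Finset.sum_congr rfl fun i _ => ?_
    have hv : pad1 v (i + 1) = v i.castSucc := pad1_succ v i.castSucc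
    rw [matA_apply_self, if_neg (by simp [i.isLt.ne]), hv]
    simp only [Fin.val_castSucc]
    ring
  · rw [matA_apply_self, if_pos (by simp), ← pad1_succ v (Fin.last m), Fin.val_last]
    ring

theorem matA_apply_self_pos {m : ℕ} {d : ℕ → ℝ} (hlast : 0 < d m + d (m + 1))
    (hstep : ∀ i : ℕ, 1 ≤ i → i + 2 ≤ m + 1 → d (i + 2) < d i) (i : Fin m) :
    0 < matA m d i i := by
  rw [matA_apply_self]
  split_ifs with h
  · linarith
  · linarith [hstep (i + 1) (by omega) (by omega)]

theorem dotProduct_matA_mulVec_pos {m : ℕ} {d : ℕ → ℝ} (hlast : 0 < d m + d (m + 1))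
    (hstep : ∀ i : ℕ, 1 ≤ i → i + 2 ≤ m + 1 → d (i + 2) < d i) {v : Fin m → ℝ} (hv : v ≠ 0) :
    0 < v ⬝ᵥ matA m d *ᵥ v := by
  rw [dotProduct_mulVec_self_eq_sum_diag (fun _ _ => matA_apply_swap d)]
  exact Finset.sum_mul_sq_pos (matA_apply_self_pos hlast hstep) hv

theorem stmt_9_general (m : ℕ) (D : Fin (m + 1) → ℝ) :
    (∀ v : Fin m → ℝ,
      4 * (v ⬝ᵥ (matA m (pad1 D)).mulVec v) =
        (∑ i ∈ Finset.Icc 1 (m - 1),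
            (pad1 D i - pad1 D (i + 2)) * (pad1 v i) ^ 2)
          + (pad1 D m + pad1 D (m + 1)) * (pad1 v m) ^ 2) ∧
    ((∀ k : Fin (m + 1), 0 < D k) →
      (∀ i : ℕ, 1 ≤ i → i + 2 ≤ m + 1 → pad1 D (i + 2) < pad1 D i) →
      ∀ v : Fin m → ℝ, v ≠ 0 → 0 < v ⬝ᵥ (matA m (pad1 D)).mulVec v) := by
  refine ⟨four_mul_dotProduct_matA_mulVec m (pad1 D), fun hpos hstep v hv => ?_⟩
  -- `pad1 D m` vanishes when `m = 0`, so only its nonnegativity is available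
  have hlast : 0 < pad1 D m + pad1 D (m + 1) := by
    have hD : pad1 D (m + 1) = D (Fin.last m) := pad1_succ D (Fin.last m)
    linarith [pad1_nonneg (fun k => (hpos k).le) m, hpos (Fin.last m)]
  exact dotProduct_matA_mulVec_pos hlast hstep hv

theorem stmt_9 (m : ℕ) (hm : 1 ≤ m) (D : Fin (m + 1) → ℝ) :
    (∀ v : Fin m → ℝ,
      4 * (v ⬝ᵥ (matA m (pad1 D)).mulVec v) =
        (∑ i ∈ Finset.Icc 1 (m - 1),
            (pad1 D i - pad1 D (i + 2)) * (pad1 v i) ^ 2)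
          + (pad1 D m + pad1 D (m + 1)) * (pad1 v m) ^ 2) ∧
    ((∀ k : Fin (m + 1), 0 < D k) →
      (∀ i : ℕ, 1 ≤ i → i + 2 ≤ m + 1 → pad1 D (i + 2) < pad1 D i) →
      ∀ v : Fin m → ℝ, v ≠ 0 → 0 < v ⬝ᵥ (matA m (pad1 D)).mulVec v) :=
  stmt_9_general m D
end
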